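/- The closed convex hull map CCH : ℍ → ℍ given by CCH([K]) = [cl conv K] is well defined (i.e., K₁ ∼ K₁' implies cl conv K₁ ∼ cl conv K₁') and is 1-Lipschitz: d_∼(CCH([K₁]), CCH([K₂])) ≤ d_∼([K₁],[K₂]) for all [K₁], [K₂] ∈ ℍ. -/

import Mathlib

open MeasureTheory Filter Topology

/-- The Hilbert space `ℓ²` of square-summable real sequences. -/
abbrev ell2 : Type := lp (fun _ : ℕ => ℝ) 2

/-- Two subsets of `ℓ²` are equivalent if there is a distance-preserving bijection
between them. -/
def SetIso (K₁ K₂ : Set ell2) : Prop :=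
  ∃ J : K₁ → K₂, Function.Bijective J ∧
    ∀ x y : K₁, dist (J x : ell2) (J y : ell2) = dist (x : ell2) (y : ell2)

/-- The Hausdorff distance up to isometry between the equivalence classes of `K₁` and `K₂`:
the infimum of the Hausdorff distances between representatives of the two classes. -/
noncomputable def dSim (K₁ K₂ : Set ell2) : ℝ :=
  sInf {r : ℝ | ∃ K₁' K₂' : Set ell2, SetIso K₁ K₁' ∧ SetIso K₂ K₂' ∧
    Metric.hausdorffDist K₁' K₂' = r}

section Aux
open Metric Set Filter Topology

local notation "⟪" x ", " y "⟫" => @inner ℝ _ _ x y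

-- polarization helper
lemma inner_eq_of_norms {a b a' b' : ell2} (h1 : ‖a‖ = ‖a'‖) (h2 : ‖b‖ = ‖b'‖)
    (h3 : ‖a - b‖ = ‖a' - b'‖) : ⟪a, b⟫ = ⟪a', b'⟫ := by
  have e1 := norm_sub_sq_real a b
  have e2 := norm_sub_sq_real a' b'
  rw [h1, h2, h3] at e1
  linarith

lemma exists_affine_extension (K₁ K₁' : Set ell2) (hne : K₁.Nonempty)
    (f : K₁ → K₁') (hf : ∀ x y : K₁, dist (f x : ell2) (f y : ell2) = dist (x : ell2) (y : ell2)) :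
    ∃ G : ell2 →ᵃ[ℝ] ell2, Continuous G ∧ (∀ x : K₁, G x = (f x : ell2)) ∧
      (∀ x ∈ closure (convexHull ℝ K₁), ∀ y ∈ closure (convexHull ℝ K₁),
        dist (G x) (G y) = dist x y) ∧
      Set.MapsTo G (closure (convexHull ℝ K₁)) (closure (convexHull ℝ K₁')) := by
  obtain ⟨p₀, hp₀⟩ := hne
  set P : K₁ := ⟨p₀, hp₀⟩ with hP
  set q₀ : ell2 := (f P : ell2) with hq₀
  -- inner products are preserved
  have hinner : ∀ x y : K₁,
      ⟪(f x : ell2) - q₀, (f y : ell2) - q₀⟫ = ⟪(x : ell2) - p₀, (y : ell2) - p₀⟫ := by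
    intro x y
    apply inner_eq_of_norms
    · rw [← dist_eq_norm, ← dist_eq_norm, hf]
    · rw [← dist_eq_norm, ← dist_eq_norm, hf]
    · rw [sub_sub_sub_cancel_right, sub_sub_sub_cancel_right, ← dist_eq_norm, ← dist_eq_norm, hf]
  -- the two linear combination maps
  set T : (K₁ →₀ ℝ) →ₗ[ℝ] ell2 :=
    Finsupp.linearCombination ℝ (fun x : K₁ => (x : ell2) - p₀) with hT
  set T' : (K₁ →₀ ℝ) →ₗ[ℝ] ell2 :=
    Finsupp.linearCombination ℝ (fun x : K₁ => (f x : ell2) - q₀) with hT'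
  have hTv : ∀ x : K₁, T (Finsupp.single x 1) = (x : ell2) - p₀ := by
    intro x; simp [hT, Finsupp.linearCombination_single]
  have hT'v : ∀ x : K₁, T' (Finsupp.single x 1) = (f x : ell2) - q₀ := by
    intro x; simp [hT', Finsupp.linearCombination_single]
  -- inner products of linear combinations
  have hinnerT : ∀ c d : K₁ →₀ ℝ, ⟪T' c, T' d⟫ = ⟪T c, T d⟫ := by
    intro c d
    rw [hT, hT', Finsupp.linearCombination_apply, Finsupp.linearCombination_apply,
      Finsupp.linearCombination_apply, Finsupp.linearCombination_apply,
      Finsupp.sum, Finsupp.sum, Finsupp.sum, Finsupp.sum,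
      sum_inner, sum_inner]
    refine Finset.sum_congr rfl fun x _ => ?_
    rw [inner_sum, inner_sum]
    refine Finset.sum_congr rfl fun y _ => ?_
    rw [real_inner_smul_left, real_inner_smul_left, real_inner_smul_right,
      real_inner_smul_right, hinner]
  have hnormT : ∀ c : K₁ →₀ ℝ, ‖T' c‖ = ‖T c‖ := by
    intro c
    have h := hinnerT c c
    rw [real_inner_self_eq_norm_sq, real_inner_self_eq_norm_sq] at h
    calc ‖T' c‖ = Real.sqrt (‖T' c‖ ^ 2) := (Real.sqrt_sq (norm_nonneg _)).symm
      _ = Real.sqrt (‖T c‖ ^ 2) := by rw [h]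
      _ = ‖T c‖ := Real.sqrt_sq (norm_nonneg _)
  -- kernel containment, factor T' through the range of T
  have hker : LinearMap.ker T ≤ LinearMap.ker T' := by
    intro c hc
    rw [LinearMap.mem_ker] at hc ⊢
    rw [← norm_eq_zero, hnormT, hc, norm_zero]
  set L0 : ↥(LinearMap.range T) →ₗ[ℝ] ell2 :=
    ((LinearMap.ker T).liftQ T' hker).comp
      (LinearMap.quotKerEquivRange T).symm.toLinearMap with hL0def
  have hL0 : ∀ c : K₁ →₀ ℝ, L0 ⟨T c, LinearMap.mem_range_self T c⟩ = T' c := by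
    intro c
    have h1 : (LinearMap.quotKerEquivRange T).symm ⟨T c, LinearMap.mem_range_self T c⟩
        = Submodule.Quotient.mk c := by
      rw [LinearEquiv.symm_apply_eq]
      exact Subtype.ext (T.quotKerEquivRange_apply_mk c).symm
    simp only [hL0def, LinearMap.comp_apply, LinearEquiv.coe_toLinearMap, h1,
      Submodule.liftQ_apply]
  have hL0iso : ∀ v : ↥(LinearMap.range T), ‖L0 v‖ = ‖(v : ell2)‖ := by
    rintro ⟨v, c, rfl⟩
    rw [hL0 c, hnormT]
  -- extend to the closure of the range
  set Vbar : Submodule ℝ ell2 := (LinearMap.range T).topologicalClosure with hVbar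
  have hle : LinearMap.range T ≤ Vbar := (LinearMap.range T).le_topologicalClosure
  set e : ↥(LinearMap.range T) →L[ℝ] ↥Vbar :=
    { toLinearMap := Submodule.inclusion hle
      cont := continuous_induced_rng.2 continuous_subtype_val } with he
  have hecoe : ∀ x : ↥(LinearMap.range T), ((e x : ↥Vbar) : ell2) = (x : ell2) := fun _ => rfl
  have h_e : Isometry e := Isometry.of_dist_eq fun x y => rfl
  have h_dense : DenseRange e := by
    intro v
    have hv : (v : ell2) ∈ closure ((LinearMap.range T : Submodule ℝ ell2) : Set ell2) := by
      rw [← Submodule.topologicalClosure_coe]; exact v.2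
    rw [mem_closure_iff_seq_limit] at hv
    obtain ⟨u, hu_mem, hu_lim⟩ := hv
    have hten : Tendsto (fun n => e ⟨u n, hu_mem n⟩) atTop (𝓝 v) := by
      rw [tendsto_subtype_rng]; exact hu_lim
    exact mem_closure_of_tendsto hten (Eventually.of_forall fun n => Set.mem_range_self _)
  set Lc : ↥(LinearMap.range T) →L[ℝ] ell2 :=
    (LinearIsometry.mk L0 hL0iso).toContinuousLinearMap with hLc
  set ψ : ↥Vbar →L[ℝ] ell2 :=
    ContinuousLinearMap.extend Lc e with hψ
  have hψe : ∀ x : ↥(LinearMap.range T), ψ (e x) = L0 x := fun x =>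
    ContinuousLinearMap.extend_eq Lc h_dense h_e.isUniformInducing x
  have hψiso : ∀ v : ↥Vbar, ‖ψ v‖ = ‖(v : ell2)‖ := by
    have hcl : IsClosed {v : ↥Vbar | ‖ψ v‖ = ‖(v : ell2)‖} :=
      isClosed_eq (continuous_norm.comp ψ.continuous)
        (continuous_norm.comp continuous_subtype_val)
    intro v
    refine h_dense.induction_on v hcl fun x => ?_
    show ‖ψ (e x)‖ = ‖((e x : ↥Vbar) : ell2)‖
    rw [hψe, hecoe, hL0iso]
  -- the global affine map
  set Λ : ell2 →L[ℝ] ell2 := ψ.comp (Vbar.orthogonalProjectionOnto) with hΛdef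
  have hΛ : ∀ (x : ell2) (hx : x ∈ Vbar), Λ x = ψ ⟨x, hx⟩ := by
    intro x hx
    have hproj : Vbar.orthogonalProjectionOnto x = ⟨x, hx⟩ :=
      Subtype.ext (Submodule.starProjection_eq_self_iff.mpr hx)
    rw [hΛdef, ContinuousLinearMap.comp_apply, hproj]
  set G : ell2 →ᵃ[ℝ] ell2 :=
    { toFun := fun x => Λ (x - p₀) + q₀
      linear := (Λ : ell2 →ₗ[ℝ] ell2)
      map_vadd' := by
        intro p v
        show Λ (v + p - p₀) + q₀ = Λ v + (Λ (p - p₀) + q₀)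
        rw [add_sub_assoc, map_add]
        abel } with hGdef
  have hGfun : ∀ x : ell2, G x = Λ (x - p₀) + q₀ := fun _ => rfl
  have hcont : Continuous G := by
    show Continuous fun x : ell2 => Λ (x - p₀) + q₀
    exact (Λ.continuous.comp (continuous_id.sub continuous_const)).add continuous_const
  -- G agrees with f on K₁
  have hGK : ∀ x : K₁, G (x : ell2) = (f x : ell2) := by
    intro x
    have hx : ((x : ell2) - p₀) ∈ LinearMap.range T := ⟨Finsupp.single x 1, hTv x⟩
    have h1 : Λ ((x : ell2) - p₀) = L0 ⟨(x : ell2) - p₀, hx⟩ := by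
      rw [hΛ _ (hle hx)]
      have : (⟨(x : ell2) - p₀, hle hx⟩ : ↥Vbar) = e ⟨(x : ell2) - p₀, hx⟩ := Subtype.ext rfl
      rw [this, hψe]
    have h2 : (⟨(x : ell2) - p₀, hx⟩ : ↥(LinearMap.range T))
        = ⟨T (Finsupp.single x 1), LinearMap.mem_range_self T _⟩ := Subtype.ext (hTv x).symm
    rw [hGfun, h1, h2, hL0, hT'v, sub_add_cancel]
  -- closure of the hull sits above the closed span
  have hSub : ∀ x ∈ closure (convexHull ℝ K₁), x - p₀ ∈ Vbar := by
    have hSclosed : IsClosed {x : ell2 | x - p₀ ∈ Vbar} :=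
      IsClosed.preimage (continuous_id.sub continuous_const)
        ((LinearMap.range T).isClosed_topologicalClosure :
          IsClosed (Vbar : Set ell2))
    have hSconvex : Convex ℝ {x : ell2 | x - p₀ ∈ Vbar} := by
      intro x hx y hy a b ha hb hab
      show a • x + b • y - p₀ ∈ Vbar
      have h2 : a • x + b • y - p₀ = a • (x - p₀) + b • (y - p₀) := by
        rw [smul_sub, smul_sub,
          show a • x - a • p₀ + (b • y - b • p₀) = a • x + b • y - (a + b) • p₀ by
            rw [add_smul]; abel, hab, one_smul]
      rw [h2]
      exact Vbar.add_mem (Vbar.smul_mem _ hx) (Vbar.smul_mem _ hy)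
    have hK : K₁ ⊆ {x : ell2 | x - p₀ ∈ Vbar} := fun x hx =>
      hle ⟨Finsupp.single (⟨x, hx⟩ : K₁) 1, hTv ⟨x, hx⟩⟩
    exact fun x hx => closure_minimal (convexHull_min hK hSconvex) hSclosed hx
  -- G is isometric on the closed convex hull
  have hGdist : ∀ x ∈ closure (convexHull ℝ K₁), ∀ y ∈ closure (convexHull ℝ K₁),
      dist (G x) (G y) = dist x y := by
    intro x hx y hy
    have hxy : x - y ∈ Vbar := by
      have := Vbar.sub_mem (hSub x hx) (hSub y hy)
      rwa [sub_sub_sub_cancel_right] at this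
    have h1 : G x - G y = Λ (x - y) := by
      rw [hGfun, hGfun, add_sub_add_right_eq_sub, ← map_sub, sub_sub_sub_cancel_right]
    rw [dist_eq_norm, h1, hΛ _ hxy, hψiso, dist_eq_norm]
  -- G maps the closed hull into the closed hull of the image
  have hGmaps : Set.MapsTo G (closure (convexHull ℝ K₁)) (closure (convexHull ℝ K₁')) := by
    have h1 : G '' K₁ ⊆ K₁' := by
      rintro _ ⟨x, hx, rfl⟩
      rw [hGK ⟨x, hx⟩]
      exact (f ⟨x, hx⟩).2
    have h2 : G '' convexHull ℝ K₁ ⊆ convexHull ℝ K₁' := by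
      rw [G.image_convexHull]
      exact convexHull_mono h1
    intro x hx
    have : G x ∈ G '' closure (convexHull ℝ K₁) := Set.mem_image_of_mem _ hx
    have := (image_closure_subset_closure_image hcont) this
    exact closure_mono h2 this
  exact ⟨G, hcont, hGK, hGdist, hGmaps⟩

lemma setIso_refl (K : Set ell2) : SetIso K K := ⟨id, Function.bijective_id, fun _ _ => rfl⟩

lemma setIso_closure_hull (K₁ K₁' : Set ell2) (hne : K₁.Nonempty) (h : SetIso K₁ K₁') :
    SetIso (closure (convexHull ℝ K₁)) (closure (convexHull ℝ K₁')) := by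
  obtain ⟨f, hfbij, hfd⟩ := h
  have hne' : K₁'.Nonempty := by
    obtain ⟨p, hp⟩ := hne
    exact ⟨f ⟨p, hp⟩, (f ⟨p, hp⟩).2⟩
  set E := Equiv.ofBijective f hfbij with hE
  have hEf : ∀ x : K₁, E x = f x := fun _ => rfl
  have hfinvd : ∀ x y : K₁', dist ((E.symm x : K₁) : ell2) ((E.symm y : K₁) : ell2)
      = dist (x : ell2) (y : ell2) := by
    intro x y
    have := hfd (E.symm x) (E.symm y)
    rw [show f (E.symm x) = x from E.apply_symm_apply x,
      show f (E.symm y) = y from E.apply_symm_apply y] at this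
    exact this.symm
  obtain ⟨G, hGc, hGK, hGd, hGm⟩ := exists_affine_extension K₁ K₁' hne f hfd
  obtain ⟨G', hG'c, hG'K, hG'd, hG'm⟩ :=
    exists_affine_extension K₁' K₁ hne' (fun y => E.symm y) hfinvd
  -- the two compositions are the identity on the closed hulls
  have hid : ∀ (A B : Set ell2) (F F' : ell2 →ᵃ[ℝ] ell2), Continuous F → Continuous F' →
      (∀ x ∈ A, F' (F x) = x) → ∀ x ∈ closure (convexHull ℝ A), F' (F x) = x := by
    intro A B F F' hFc hF'c hAB
    have hclosed : IsClosed {x : ell2 | F' (F x) = x} :=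
      isClosed_eq (hF'c.comp hFc) continuous_id
    have hconv : Convex ℝ {x : ell2 | F' (F x) = x} := by
      intro x hx y hy a b ha hb hab
      show F' (F (a • x + b • y)) = a • x + b • y
      rw [Convex.combo_affine_apply hab, Convex.combo_affine_apply hab,
        Set.mem_setOf_eq.mp hx, Set.mem_setOf_eq.mp hy]
    exact fun x hx => closure_minimal (convexHull_min hAB hconv) hclosed hx
  have hid1 : ∀ x ∈ closure (convexHull ℝ K₁), G' (G x) = x := by
    refine hid K₁ K₁' G G' hGc hG'c fun x hx => ?_
    rw [hGK ⟨x, hx⟩, hG'K (f ⟨x, hx⟩)]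
    exact congrArg _ (E.symm_apply_apply ⟨x, hx⟩)
  have hid2 : ∀ y ∈ closure (convexHull ℝ K₁'), G (G' y) = y := by
    refine hid K₁' K₁ G' G hG'c hGc fun y hy => ?_
    rw [hG'K ⟨y, hy⟩, hGK (E.symm ⟨y, hy⟩)]
    exact congrArg _ (E.apply_symm_apply ⟨y, hy⟩)
  refine ⟨fun x => ⟨G x, hGm x.2⟩, ?_, fun x y => hGd x x.2 y y.2⟩
  refine Function.bijective_iff_has_inverse.mpr ⟨fun y => ⟨G' y, hG'm y.2⟩, ?_, ?_⟩
  · intro x; exact Subtype.ext (hid1 x x.2)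
  · intro y; exact Subtype.ext (hid2 y y.2)

open Bornology in
lemma hausdorffDist_closure_hull_le (A B : Set ell2) (hA : A.Nonempty) (hB : B.Nonempty)
    (fin : EMetric.hausdorffEdist A B ≠ ⊤) :
    Metric.hausdorffDist (closure (convexHull ℝ A)) (closure (convexHull ℝ B))
      ≤ Metric.hausdorffDist A B := by
  set r := Metric.hausdorffDist A B with hr
  have hr0 : 0 ≤ r := Metric.hausdorffDist_nonneg
  have step : ∀ C D : Set ell2, D.Nonempty → EMetric.hausdorffEdist C D ≠ ⊤ →
      Metric.hausdorffDist C D = r →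
      ∀ x ∈ closure (convexHull ℝ C), Metric.infDist x (closure (convexHull ℝ D)) ≤ r := by
    intro C D hD finCD hrCD
    have hsub1 : C ⊆ Metric.cthickening r D := by
      intro a ha
      rw [Metric.mem_cthickening_iff]
      have h1 : Metric.infDist a D ≤ r := hrCD ▸ Metric.infDist_le_hausdorffDist_of_mem ha finCD
      exact (ENNReal.le_ofReal_iff_toReal_le (Metric.infEdist_ne_top hD) hr0).mpr h1
    have hsub2 : closure (convexHull ℝ C) ⊆ Metric.cthickening r (closure (convexHull ℝ D)) := by
      refine closure_minimal (convexHull_min ?_ ?_) Metric.isClosed_cthickening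
      · exact hsub1.trans (Metric.cthickening_subset_of_subset r
          ((subset_convexHull ℝ D).trans subset_closure))
      · exact ((convex_convexHull ℝ D).closure).cthickening r
    intro x hx
    have := Metric.mem_cthickening_iff.mp (hsub2 hx)
    calc Metric.infDist x (closure (convexHull ℝ D))
        = (EMetric.infEdist x (closure (convexHull ℝ D))).toReal := rfl
      _ ≤ r := ENNReal.toReal_le_of_le_ofReal hr0 this
  refine Metric.hausdorffDist_le_of_infDist hr0 ?_ ?_
  · exact step A B hB fin rfl
  · exact step B A hA (fun h => fin (by unfold EMetric.hausdorffEdist at h ⊢; rwa [Metric.hausdorffEDist_comm] at h))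
      (by rw [Metric.hausdorffDist_comm])

lemma setIso_nonempty {K K' : Set ell2} (h : SetIso K K') (hn : K.Nonempty) : K'.Nonempty := by
  obtain ⟨f, _, _⟩ := h
  obtain ⟨p, hp⟩ := hn
  exact ⟨f ⟨p, hp⟩, (f ⟨p, hp⟩).2⟩

open Bornology in
lemma setIso_bounded {K K' : Set ell2} (h : SetIso K K') (hb : IsBounded K) : IsBounded K' := by
  obtain ⟨f, ⟨_, fsurj⟩, fd⟩ := h
  rw [Metric.isBounded_iff] at hb ⊢
  obtain ⟨C, hC⟩ := hb
  refine ⟨C, fun x hx y hy => ?_⟩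
  obtain ⟨a, ha⟩ := fsurj ⟨x, hx⟩
  obtain ⟨b, hb'⟩ := fsurj ⟨y, hy⟩
  have : dist x y = dist (a : ell2) (b : ell2) := by
    rw [← fd a b, ha, hb']
  rw [this]
  exact hC a.2 b.2

end Aux

/-- Lemma 4.1: the closed convex hull map `CCH : ℍ → ℍ`, `[K] ↦ [cl conv K]`, is well
defined (isometric compact sets have isometric closed convex hulls) and `1`-Lipschitz with
respect to the Hausdorff distance up to isometry. -/
theorem closedConvexHull_well_defined_and_lipschitz :
    (∀ K₁ K₁' : Set ell2, IsCompact K₁ → K₁.Nonempty → IsCompact K₁' → K₁'.Nonempty →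
      SetIso K₁ K₁' →
      SetIso (closure (convexHull ℝ K₁)) (closure (convexHull ℝ K₁'))) ∧
    (∀ K₁ K₂ : Set ell2, IsCompact K₁ → K₁.Nonempty → IsCompact K₂ → K₂.Nonempty →
      dSim (closure (convexHull ℝ K₁)) (closure (convexHull ℝ K₂)) ≤ dSim K₁ K₂) := by
  constructor
  · intro K₁ K₁' _ hn _ _ h
    exact setIso_closure_hull K₁ K₁' hn h
  · intro K₁ K₂ hc₁ hn₁ hc₂ hn₂
    refine le_csInf ⟨Metric.hausdorffDist K₁ K₂, K₁, K₂, setIso_refl _, setIso_refl _, rfl⟩ ?_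
    rintro r ⟨K₁', K₂', h1, h2, rfl⟩
    have hn₁' := setIso_nonempty h1 hn₁
    have hn₂' := setIso_nonempty h2 hn₂
    have hb₁' := setIso_bounded h1 hc₁.isBounded
    have hb₂' := setIso_bounded h2 hc₂.isBounded
    have fin : EMetric.hausdorffEdist K₁' K₂' ≠ ⊤ :=
      Metric.hausdorffEdist_ne_top_of_nonempty_of_bounded hn₁' hn₂' hb₁' hb₂'
    have iso1 := setIso_closure_hull K₁ K₁' hn₁ h1
    have iso2 := setIso_closure_hull K₂ K₂' hn₂ h2
    refine le_trans (csInf_le ?_ ?_) (hausdorffDist_closure_hull_le K₁' K₂' hn₁' hn₂' fin)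
    · refine ⟨0, fun s hs => ?_⟩
      obtain ⟨_, _, _, _, rfl⟩ := hs
      exact Metric.hausdorffDist_nonneg
    · exact ⟨closure (convexHull ℝ K₁'), closure (convexHull ℝ K₂'), iso1, iso2, rfl⟩
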